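/- arXiv:math/0204099 — 3 statements merged into one kernel-verified Lean document; each statement's English description precedes it below -/
import Mathlib

section
/- Equivalence classes of purely pseudofunctorial first-order deformations of a K-linear unitary pseudofunctor F are in bijection with the second cohomology group H²(F) of its purely pseudofunctorial deformation complex. -/
open CategoryTheory CategoryTheory.Bicategory

universe w₁ w₂ v₁ v₂ u₁ u₂

variable {K : Type*} [CommRing K]
variable {B : Type u₁} [Bicategory.{w₁, v₁} B] [Bicategory.Strict B]
variable {C : Type u₂} [Bicategory.{w₂, v₂} C] [Bicategory.Strict C]
variable [∀ X Y : C, Preadditive (X ⟶ Y)]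

/-- The composition part `F̂(g,f) : F(f) ≫ F(g) ⟶ F(f ≫ g)` of the pseudofunctorial
structure of `F`. -/
abbrev pfStr (F : Pseudofunctor B C) {X Y Z : B} (f : X ⟶ Y) (g : Y ⟶ Z) :
    F.map f ≫ F.map g ⟶ F.map (f ≫ g) :=
  (F.mapComp f g).inv

/-- A purely pseudofunctorial first-order deformation of a unitary pseudofunctor `F`
over `K[ε]/(ε²)`: the equations are the coefficients of `ε` in the pseudofunctor axioms
for `F̂ + F̂⁽¹⁾ε`, `1 + F₀⁽¹⁾ε` (strict 2-categories). -/
structure PPFDeformation (F : Pseudofunctor B C)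
    (hmap : ∀ X : B, F.map (𝟙 X) = 𝟙 (F.obj X)) where
  F1 : ∀ {X Y Z : B} (f : X ⟶ Y) (g : Y ⟶ Z), F.map f ≫ F.map g ⟶ F.map (f ≫ g)
  F01 : ∀ X : B, F.map (𝟙 X) ⟶ 𝟙 (F.obj X)
  natural : ∀ {X Y Z : B} {f f' : X ⟶ Y} {g g' : Y ⟶ Z} (η : f ⟶ f') (θ : g ⟶ g'),
    (F.map₂ η ▷ F.map g ≫ F.map f' ◁ F.map₂ θ) ≫ F1 f' g' =
      F1 f g ≫ F.map₂ (η ▷ g ≫ f' ◁ θ)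
  hexagon : ∀ {W X Y Z : B} (f : W ⟶ X) (g : X ⟶ Y) (h : Y ⟶ Z),
    (F1 f g ▷ F.map h) ≫ pfStr F (f ≫ g) h + (pfStr F f g ▷ F.map h) ≫ F1 (f ≫ g) h =
      eqToHom (Bicategory.Strict.assoc (F.map f) (F.map g) (F.map h)) ≫
        ((F.map f ◁ F1 g h) ≫ pfStr F f (g ≫ h) +
          (F.map f ◁ pfStr F g h) ≫ F1 f (g ≫ h)) ≫
        eqToHom (congrArg F.map (Bicategory.Strict.assoc f g h).symm)
  triangle_left : ∀ {X Y : B} (f : X ⟶ Y),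
    F1 (𝟙 X) f = (F01 X ▷ F.map f) ≫
      eqToHom (by rw [Bicategory.Strict.id_comp, Bicategory.Strict.id_comp])
  triangle_right : ∀ {X Y : B} (f : X ⟶ Y),
    F1 f (𝟙 Y) = (F.map f ◁ F01 Y) ≫
      eqToHom (by rw [Bicategory.Strict.comp_id, Bicategory.Strict.comp_id])

variable (F : Pseudofunctor B C)

/-- Degree 1 cochains of the purely pseudofunctorial deformation complex `X•(F)`. -/
def OneFam := ∀ (X Y : B) (f : X ⟶ Y), F.map f ⟶ F.map f

/-- Degree 2 cochains of the purely pseudofunctorial deformation complex `X•(F)`. -/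
def TwoFam := ∀ (X Y Z : B) (f : X ⟶ Y) (g : Y ⟶ Z), F.map f ≫ F.map g ⟶ F.map (f ≫ g)

/-- Naturality of a degree 1 cochain. -/
def Natural1 (ξ : OneFam F) : Prop :=
  ∀ {X Y : B} {f f' : X ⟶ Y} (η : f ⟶ f'), F.map₂ η ≫ ξ X Y f' = ξ X Y f ≫ F.map₂ η

/-- Naturality of a degree 2 cochain. -/
def Natural2 (W : TwoFam F) : Prop :=
  ∀ {X Y Z : B} {f f' : X ⟶ Y} {g g' : Y ⟶ Z} (η : f ⟶ f') (θ : g ⟶ g'),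
    (F.map₂ η ▷ F.map g ≫ F.map f' ◁ F.map₂ θ) ≫ W X Y Z f' g' =
      W X Y Z f g ≫ F.map₂ (η ▷ g ≫ f' ◁ θ)

/-- The coboundary `δ : X¹(F) → X²(F)` (with the canonical paddings). -/
def d1 (ξ : OneFam F) : TwoFam F := fun X Y Z f g =>
  (ξ X Y f ▷ F.map g) ≫ pfStr F f g - pfStr F f g ≫ ξ X Z (f ≫ g) +
    (F.map f ◁ ξ Y Z g) ≫ pfStr F f g

/-- The coboundary `δ : X²(F) → X³(F)` (with the canonical paddings). -/
def d2 (W : TwoFam F) : ∀ (X Y Z T : B) (f : X ⟶ Y) (g : Y ⟶ Z) (h : Z ⟶ T),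
    F.map f ≫ F.map g ≫ F.map h ⟶ F.map (f ≫ g ≫ h) := fun X Y Z T f g h =>
  (eqToHom (Bicategory.Strict.assoc (F.map f) (F.map g) (F.map h)).symm ≫
      (W X Y Z f g ▷ F.map h) ≫ pfStr F (f ≫ g) h ≫
      eqToHom (congrArg F.map (Bicategory.Strict.assoc f g h)))
  - (F.map f ◁ pfStr F g h) ≫ W X Y T f (g ≫ h)
  + (eqToHom (Bicategory.Strict.assoc (F.map f) (F.map g) (F.map h)).symm ≫
      (pfStr F f g ▷ F.map h) ≫ W X Z T (f ≫ g) h ≫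
      eqToHom (congrArg F.map (Bicategory.Strict.assoc f g h)))
  - (F.map f ◁ W Y Z T g h) ≫ pfStr F f (g ≫ h)

/-- Degree 2 cocycles of `X•(F)`. -/
def Cocycle2 :=
  { W : TwoFam F // Natural2 F W ∧ ∀ (X Y Z T : B) (f : X ⟶ Y) (g : Y ⟶ Z) (h : Z ⟶ T),
      d2 F W X Y Z T f g h = 0 }

/-- Two degree 2 cocycles are cohomologous if they differ by the coboundary of a natural
degree 1 cochain. -/
def Cohomologous (z z' : Cocycle2 F) : Prop :=
  ∃ ξ : OneFam F, Natural1 F ξ ∧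
    ∀ (X Y Z : B) (f : X ⟶ Y) (g : Y ⟶ Z),
      z'.1 X Y Z f g - z.1 X Y Z f g = d1 F ξ X Y Z f g

variable {F}

/-- Equivalence of purely pseudofunctorial first-order deformations: there is a
pseudonatural isomorphism between the deformed pseudofunctors whose 1-cells are
identities and whose 2-cells reduce to identities mod `ε`; in first order this amounts
to the three conditions below. -/
def EquivDef (hmap : ∀ X : B, F.map (𝟙 X) = 𝟙 (F.obj X))
    (D D' : PPFDeformation F hmap) : Prop :=
  ∃ ξ : OneFam F, Natural1 F ξ ∧
    (∀ (X Y Z : B) (f : X ⟶ Y) (g : Y ⟶ Z),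
      D'.F1 f g - D.F1 f g = d1 F ξ X Y Z f g) ∧
    (∀ X : B, D'.F01 X - D.F01 X = ξ X X (𝟙 X) ≫ eqToHom (hmap X))

/-! A deformation is determined by its composition part `F̂⁽¹⁾`: the triangle axioms force
`F₀⁽¹⁾` to be `F̂⁽¹⁾(𝟙, 𝟙)` transported along `F(𝟙) = 𝟙`, and the hexagon axiom is the cocycle
condition `δF̂⁽¹⁾ = 0`. Conversely, since `F` is unitary, the cocycle condition at `(𝟙, 𝟙, f)`
and `(f, 𝟙, 𝟙)` says that every 2-cocycle satisfies the triangle axioms for this choice of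
`F₀⁽¹⁾`. So deformations are the same as 2-cocycles, and `ξ` is an equivalence of deformations
exactly when `δξ = F̂'⁽¹⁾ - F̂⁽¹⁾`: the condition on `F₀⁽¹⁾` is the `(𝟙, 𝟙)` component of that
equation. -/

namespace CategoryTheory.Bicategory.Strict

variable {𝒜 : Type*} [Bicategory 𝒜] [Strict 𝒜] {a b : 𝒜} {f f' : a ⟶ b}

theorem whiskerRight_of_eq_id (η : f ⟶ f') {u : b ⟶ b} (hu : u = 𝟙 b) :
    η ▷ u = eqToHom (by rw [hu, comp_id]) ≫ η ≫ eqToHom (by rw [hu, comp_id]) := by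
  subst hu
  simp [rightUnitor_eqToIso]

theorem whiskerLeft_of_eq_id (η : f ⟶ f') {u : a ⟶ a} (hu : u = 𝟙 a) :
    u ◁ η = eqToHom (by rw [hu, id_comp]) ≫ η ≫ eqToHom (by rw [hu, id_comp]) := by
  subst hu
  simp [leftUnitor_eqToIso]

end CategoryTheory.Bicategory.Strict

section Cochains

variable (hmap : ∀ X : B, F.map (𝟙 X) = 𝟙 (F.obj X))

omit [∀ X Y : C, Preadditive (X ⟶ Y)] in
theorem pfStr_id_left (hunitary : ∀ X : B, (F.mapId X).hom = eqToHom (hmap X))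
    {X Y : B} (f : X ⟶ Y) :
    pfStr F (𝟙 X) f = eqToHom (by rw [hmap, Strict.id_comp, Strict.id_comp]) := by
  simp [pfStr, F.mapComp_id_left_inv, hunitary, Strict.leftUnitor_eqToIso,
    PrelaxFunctor.map₂_eqToHom]

omit [∀ X Y : C, Preadditive (X ⟶ Y)] in
theorem pfStr_id_right (hunitary : ∀ X : B, (F.mapId X).hom = eqToHom (hmap X))
    {X Y : B} (f : X ⟶ Y) :
    pfStr F f (𝟙 Y) = eqToHom (by rw [hmap, Strict.comp_id, Strict.comp_id]) := by
  simp [pfStr, F.mapComp_id_right_inv, hunitary, Strict.rightUnitor_eqToIso,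
    PrelaxFunctor.map₂_eqToHom]

theorem d2_eq_zero_iff_hexagon (W : TwoFam F) {X Y Z T : B} (f : X ⟶ Y) (g : Y ⟶ Z)
    (h : Z ⟶ T) :
    d2 F W X Y Z T f g h = 0 ↔
      (W X Y Z f g ▷ F.map h) ≫ pfStr F (f ≫ g) h +
          (pfStr F f g ▷ F.map h) ≫ W X Z T (f ≫ g) h =
        eqToHom (Strict.assoc (F.map f) (F.map g) (F.map h)) ≫
          ((F.map f ◁ W Y Z T g h) ≫ pfStr F f (g ≫ h) +
            (F.map f ◁ pfStr F g h) ≫ W X Y T f (g ≫ h)) ≫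
          eqToHom (congrArg F.map (Strict.assoc f g h).symm) := by
  have hd2 : d2 F W X Y Z T f g h =
      eqToHom (Strict.assoc (F.map f) (F.map g) (F.map h)).symm ≫
        ((W X Y Z f g ▷ F.map h) ≫ pfStr F (f ≫ g) h +
          (pfStr F f g ▷ F.map h) ≫ W X Z T (f ≫ g) h) ≫
        eqToHom (congrArg F.map (Strict.assoc f g h)) -
      ((F.map f ◁ W Y Z T g h) ≫ pfStr F f (g ≫ h) +
        (F.map f ◁ pfStr F g h) ≫ W X Y T f (g ≫ h)) := by
    simp only [d2, Preadditive.comp_add, Preadditive.add_comp, Category.assoc]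
    abel
  rw [hd2, sub_eq_zero, eqToHom_comp_iff, comp_eqToHom_iff]
  simp only [Category.assoc]

/-- The unit part `F₀⁽¹⁾` that the triangle axioms force on a deformation with composition
part `W`. -/
def unitPart (W : TwoFam F) (X : B) : F.map (𝟙 X) ⟶ 𝟙 (F.obj X) :=
  eqToHom (by rw [hmap, Strict.id_comp]) ≫ W X X X (𝟙 X) (𝟙 X) ≫
    eqToHom (by rw [Strict.id_comp, hmap])

theorem unitPart_d1 (hunitary : ∀ X : B, (F.mapId X).hom = eqToHom (hmap X))
    (ξ : OneFam F) (X : B) :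
    unitPart hmap (d1 F ξ) X = ξ X X (𝟙 X) ≫ eqToHom (hmap X) := by
  rw [unitPart, d1, pfStr_id_left hmap hunitary, dcongr_arg (ξ X X) (Strict.id_comp (𝟙 X)),
    Strict.whiskerRight_of_eq_id (ξ X X (𝟙 X)) (hmap X),
    Strict.whiskerLeft_of_eq_id (ξ X X (𝟙 X)) (hmap X)]
  simp only [Preadditive.comp_sub, Preadditive.sub_comp, Preadditive.comp_add,
    Preadditive.add_comp, Category.assoc, eqToHom_trans, eqToHom_trans_assoc, eqToHom_refl,
    Category.id_comp]
  abel

theorem cocycle_apply_id_left (hunitary : ∀ X : B, (F.mapId X).hom = eqToHom (hmap X))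
    (W : TwoFam F) (hW : ∀ (X Y Z T : B) (f : X ⟶ Y) (g : Y ⟶ Z) (h : Z ⟶ T),
      d2 F W X Y Z T f g h = 0) {X Y : B} (f : X ⟶ Y) :
    W X X Y (𝟙 X) f = (unitPart hmap W X ▷ F.map f) ≫
      eqToHom (by rw [Strict.id_comp, Strict.id_comp]) := by
  have hz := hW X X X Y (𝟙 X) (𝟙 X) f
  rw [d2, dcongr_arg (fun k => pfStr F k f) (Strict.id_comp (𝟙 X)),
    dcongr_arg (W X X Y (𝟙 X)) (Strict.id_comp f),
    dcongr_arg (fun k => W X X Y k f) (Strict.id_comp (𝟙 X)),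
    Strict.whiskerLeft_of_eq_id (W X X Y (𝟙 X) f) (hmap X)] at hz
  simp only [pfStr_id_left hmap hunitary, eqToHom_whiskerRight, whiskerLeft_eqToHom,
    eqToHom_trans, eqToHom_trans_assoc, Category.assoc] at hz
  -- the last three terms of `hz` are all `W(𝟙, f)` transported
  rw [sub_add_cancel, sub_eq_zero, eq_comm, eqToHom_comp_iff, comp_eqToHom_iff] at hz
  rw [hz]
  simp [unitPart]

theorem cocycle_apply_id_right (hunitary : ∀ X : B, (F.mapId X).hom = eqToHom (hmap X))
    (W : TwoFam F) (hW : ∀ (X Y Z T : B) (f : X ⟶ Y) (g : Y ⟶ Z) (h : Z ⟶ T),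
      d2 F W X Y Z T f g h = 0) {X Y : B} (f : X ⟶ Y) :
    W X Y Y f (𝟙 Y) = (F.map f ◁ unitPart hmap W Y) ≫
      eqToHom (by rw [Strict.comp_id, Strict.comp_id]) := by
  have hz := hW X Y Y Y f (𝟙 Y) (𝟙 Y)
  rw [d2, dcongr_arg (pfStr F f) (Strict.id_comp (𝟙 Y)),
    dcongr_arg (fun k => pfStr F k (𝟙 Y)) (Strict.comp_id f),
    dcongr_arg (W X Y Y f) (Strict.id_comp (𝟙 Y)),
    dcongr_arg (fun k => W X Y Y k (𝟙 Y)) (Strict.comp_id f),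
    Strict.whiskerRight_of_eq_id (W X Y Y f (𝟙 Y)) (hmap Y)] at hz
  simp only [pfStr_id_right hmap hunitary, eqToHom_whiskerRight, whiskerLeft_eqToHom,
    eqToHom_trans, eqToHom_trans_assoc, Category.assoc] at hz
  -- the first three terms of `hz` are all `W(f, 𝟙)` transported
  rw [sub_self, zero_add, sub_eq_zero, eqToHom_comp_iff, comp_eqToHom_iff] at hz
  rw [hz]
  simp [unitPart]

end Cochains

namespace PPFDeformation

variable {hmap : ∀ X : B, F.map (𝟙 X) = 𝟙 (F.obj X)}

def toCocycle2 (D : PPFDeformation F hmap) : Cocycle2 F :=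
  ⟨fun _ _ _ f g => D.F1 f g, D.natural,
    fun _ _ _ _ f g h => (d2_eq_zero_iff_hexagon _ f g h).mpr (D.hexagon f g h)⟩

theorem F01_eq_unitPart (D : PPFDeformation F hmap) :
    D.F01 = unitPart hmap D.toCocycle2.1 := by
  funext X
  dsimp only [unitPart, toCocycle2]
  rw [D.triangle_left (𝟙 X), Strict.whiskerRight_of_eq_id (D.F01 X) (hmap X)]
  simp

variable (hmap) in
def ofCocycle2 (hunitary : ∀ X : B, (F.mapId X).hom = eqToHom (hmap X)) (z : Cocycle2 F) :
    PPFDeformation F hmap where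
  F1 f g := z.1 _ _ _ f g
  F01 := unitPart hmap z.1
  natural := z.2.1
  hexagon f g h := (d2_eq_zero_iff_hexagon z.1 f g h).mp (z.2.2 _ _ _ _ f g h)
  triangle_left := cocycle_apply_id_left hmap hunitary z.1 z.2.2
  triangle_right := cocycle_apply_id_right hmap hunitary z.1 z.2.2

end PPFDeformation

section Deformations

variable (hmap : ∀ X : B, F.map (𝟙 X) = 𝟙 (F.obj X))

def ppfDeformationEquivCocycle2 (hunitary : ∀ X : B, (F.mapId X).hom = eqToHom (hmap X)) : PPFDeformation F hmap ≃ Cocycle2 F where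
  toFun := PPFDeformation.toCocycle2
  invFun := PPFDeformation.ofCocycle2 hmap hunitary
  left_inv D := by
    have hF01 := D.F01_eq_unitPart
    cases D
    simp only [PPFDeformation.ofCocycle2, ← hF01]
    rfl
  right_inv _ := rfl

theorem equivDef_iff_cohomologous (hunitary : ∀ X : B, (F.mapId X).hom = eqToHom (hmap X))
    (D D' : PPFDeformation F hmap) :
    EquivDef hmap D D' ↔ Cohomologous F D.toCocycle2 D'.toCocycle2 := by
  refine ⟨fun ⟨ξ, hξ, hF1, _⟩ => ⟨ξ, hξ, hF1⟩, fun ⟨ξ, hξ, hF1⟩ => ⟨ξ, hξ, hF1, fun X => ?_⟩⟩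
  rw [D.F01_eq_unitPart, D'.F01_eq_unitPart, ← unitPart_d1 hmap hunitary, unitPart, unitPart,
    unitPart, ← hF1]
  simp only [Preadditive.comp_sub, Preadditive.sub_comp]

end Deformations

/-- Equivalence classes of purely pseudofunctorial first-order deformations of a
`K`-linear unitary pseudofunctor `F` are in bijection with the elements of `H²(F)`,
the second cohomology of its purely pseudofunctorial deformation complex; the bijection
sends the class of a deformation to the class of its 2-cocycle `F̂⁽¹⁾`. -/
theorem ppf_first_order_deformations_biject_H2
    (hmap : ∀ X : B, F.map (𝟙 X) = 𝟙 (F.obj X))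
    (hunitary : ∀ X : B, (F.mapId X).hom = eqToHom (hmap X)) :
    ∃ e : Quot (EquivDef hmap) ≃ Quot (Cohomologous F),
      ∀ (D : PPFDeformation F hmap) (z : Cocycle2 F),
        z.1 = (fun X Y Z f g => D.F1 f g) →
        e (Quot.mk _ D) = Quot.mk _ z :=
  ⟨Quot.congr (ppfDeformationEquivCocycle2 hmap hunitary)
      (equivDef_iff_cohomologous hmap hunitary),
    fun _ _ hz => congrArg (Quot.mk _) (Subtype.ext hz.symm)⟩
end

section
/- In a Gray semigroup (C, ⊗), the n-fold iterated tensor products agree as pseudofunctors for every n ≥ 1: the completely right-parenthesized iterate ⊗^(n) and the completely left-parenthesized iterate ^(n)⊗ from C^n to C are equal, including their structural 2-isomorphisms, and the resulting pseudofunctor ⊗(n) is unitary. -/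
open CategoryTheory CategoryTheory.Bicategory

universe w v u

variable {C : Type u} [Bicategory.{w, v} C] [Bicategory.Strict C]

/-- A Gray semigroup structure on a strict 2-category `C`: a cubical pseudofunctor
`⊗ : C × C → C` with strictly associative action on objects and 1-morphisms (trivial
associator), trivial pentagonator, and satisfying the cocycle and interchange axioms. -/
structure GrayTensor (C : Type u) [Bicategory.{w, v} C] [Bicategory.Strict C] where
  obj : C → C → C
  map : ∀ {X X' Y Y' : C}, (X ⟶ X') → (Y ⟶ Y') → (obj X Y ⟶ obj X' Y')
  map₂ : ∀ {X X' Y Y' : C} {f f' : X ⟶ X'} {g g' : Y ⟶ Y'},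
    (f ⟶ f') → (g ⟶ g') → (map f g ⟶ map f' g')
  map₂_id : ∀ {X X' Y Y' : C} (f : X ⟶ X') (g : Y ⟶ Y'), map₂ (𝟙 f) (𝟙 g) = 𝟙 (map f g)
  map₂_vcomp : ∀ {X X' Y Y' : C} {f f' f'' : X ⟶ X'} {g g' g'' : Y ⟶ Y'}
    (τ : f ⟶ f') (τ' : f' ⟶ f'') (σ : g ⟶ g') (σ' : g' ⟶ g''),
    map₂ (τ ≫ τ') (σ ≫ σ') = map₂ τ σ ≫ map₂ τ' σ'
  map_id : ∀ X Y : C, map (𝟙 X) (𝟙 Y) = 𝟙 (obj X Y)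
  str : ∀ {X X' X'' Y Y' Y'' : C} (f : X ⟶ X') (g : Y ⟶ Y') (f' : X' ⟶ X'') (g' : Y' ⟶ Y''),
    (map f g ≫ map f' g') ≅ map (f ≫ f') (g ≫ g')
  str_natural : ∀ {X X' X'' Y Y' Y'' : C} {f₁ f₂ : X ⟶ X'} {g₁ g₂ : Y ⟶ Y'}
    {f₁' f₂' : X' ⟶ X''} {g₁' g₂' : Y' ⟶ Y''} (τ : f₁ ⟶ f₂) (σ : g₁ ⟶ g₂)
    (τ' : f₁' ⟶ f₂') (σ' : g₁' ⟶ g₂'),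
    (map₂ τ σ ▷ map f₁' g₁' ≫ map f₂ g₂ ◁ map₂ τ' σ') ≫ (str f₂ g₂ f₂' g₂').hom =
      (str f₁ g₁ f₁' g₁').hom ≫ map₂ (τ ▷ f₁' ≫ f₂ ◁ τ') (σ ▷ g₁' ≫ g₂ ◁ σ')
  str_cocycle : ∀ {X₀ X₁ X₂ X₃ Y₀ Y₁ Y₂ Y₃ : C} (f : X₀ ⟶ X₁) (g : Y₀ ⟶ Y₁)
    (f' : X₁ ⟶ X₂) (g' : Y₁ ⟶ Y₂) (f'' : X₂ ⟶ X₃) (g'' : Y₂ ⟶ Y₃),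
    (map f g ◁ (str f' g' f'' g'').hom) ≫ (str f g (f' ≫ f'') (g' ≫ g'')).hom =
      eqToHom (Bicategory.Strict.assoc (map f g) (map f' g') (map f'' g'')).symm ≫
        ((str f g f' g').hom ▷ map f'' g'') ≫ (str (f ≫ f') (g ≫ g') f'' g'').hom ≫
        eqToHom (by rw [Bicategory.Strict.assoc, Bicategory.Strict.assoc])
  cubical₁ : ∀ {X X' X'' Y Y' : C} (f : X ⟶ X') (g : Y ⟶ Y') (f' : X' ⟶ X''),
    map f g ≫ map f' (𝟙 Y') = map (f ≫ f') (g ≫ 𝟙 Y')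
  cubical₁_str : ∀ {X X' X'' Y Y' : C} (f : X ⟶ X') (g : Y ⟶ Y') (f' : X' ⟶ X''),
    (str f g f' (𝟙 Y')).hom = eqToHom (cubical₁ f g f')
  cubical₂ : ∀ {X X' Y Y' Y'' : C} (g : Y ⟶ Y') (f' : X ⟶ X') (g' : Y' ⟶ Y''),
    map (𝟙 X) g ≫ map f' g' = map (𝟙 X ≫ f') (g ≫ g')
  cubical₂_str : ∀ {X X' Y Y' Y'' : C} (g : Y ⟶ Y') (f' : X ⟶ X') (g' : Y' ⟶ Y''),
    (str (𝟙 X) g f' g').hom = eqToHom (cubical₂ g f' g')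
  objAssoc : ∀ X Y Z : C, obj X (obj Y Z) = obj (obj X Y) Z
  mapAssoc : ∀ {X X' Y Y' Z Z' : C} (f : X ⟶ X') (g : Y ⟶ Y') (h : Z ⟶ Z'),
    HEq (map f (map g h)) (map (map f g) h)
  map₂Assoc : ∀ {X X' Y Y' Z Z' : C} {f f' : X ⟶ X'} {g g' : Y ⟶ Y'} {h h' : Z ⟶ Z'}
    (τ : f ⟶ f') (σ : g ⟶ g') (ρ : h ⟶ h'),
    HEq (map₂ τ (map₂ σ ρ)) (map₂ (map₂ τ σ) ρ)
  gray : ∀ {X₀ X₁ X₂ Y₀ Y₁ Y₂ Z₀ Z₁ Z₂ : C} (f : X₀ ⟶ X₁) (f' : X₁ ⟶ X₂)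
    (g : Y₀ ⟶ Y₁) (g' : Y₁ ⟶ Y₂) (h : Z₀ ⟶ Z₁) (h' : Z₁ ⟶ Z₂),
    HEq ((str (map f g) h (map f' g') h').hom ≫ map₂ (str f g f' g').hom (𝟙 (h ≫ h')))
        ((str f (map g h) f' (map g' h')).hom ≫ map₂ (𝟙 (f ≫ f')) (str g h g' h').hom)

namespace GrayTensor

/-- The (right-nested) iterated tensor product of a nonempty tuple of objects,
encoded as a head object and a list. -/
def tObj (T : GrayTensor C) : C → List C → C
  | X, [] => X
  | X, Y :: L => T.obj X (tObj T Y L)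

lemma tObj_assoc (T : GrayTensor C) (X Y : C) (L : List C) :
    T.tObj (T.obj X Y) L = T.obj X (T.tObj Y L) := by
  cases L with
  | nil => rfl
  | cons Z L => exact (T.objAssoc X Y (T.tObj Z L)).symm

end GrayTensor
namespace GrayTensor

variable {C : Type u} [Bicategory.{w, v} C] [Bicategory.Strict C]

/-- A parallel tuple of 1-morphisms between two (nonempty) tuples of objects, each
encoded as a head object together with a list of objects. -/
inductive Tup (T : GrayTensor C) : C → List C → C → List C → Type (max u v)
  | base : ∀ {X Y : C}, (X ⟶ Y) → Tup T X [] Y []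
  | cons : ∀ {X Y Z W : C} {Ls Lt : List C}, (X ⟶ Y) → Tup T Z Ls W Lt →
      Tup T X (Z :: Ls) Y (W :: Lt)

/-- The (right-nested, `⊗⁽ⁿ⁾`-style) tensor product of a parallel tuple of
1-morphisms. -/
def tM (T : GrayTensor C) :
    ∀ {X Y : C} {Ls Lt : List C}, T.Tup X Ls Y Lt → (T.tObj X Ls ⟶ T.tObj Y Lt)
  | _, _, _, _, .base f => f
  | _, _, _, _, .cons f t => T.map f (tM T t)

/-- Componentwise (vertical) composition of parallel tuples. -/
def vcompT (T : GrayTensor C) :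
    ∀ {X Y Z : C} {Ls Lm Lt : List C}, T.Tup X Ls Y Lm → T.Tup Y Lm Z Lt → T.Tup X Ls Z Lt
  | _, _, _, _, _, _, .base f, .base g => .base (f ≫ g)
  | _, _, _, _, _, _, .cons f t, .cons g s => .cons (f ≫ g) (vcompT T t s)

/-- The structural 2-cell of the right-nested iterated tensor product `⊗⁽ⁿ⁾` on a pair
of composable parallel tuples (built from `⊗̂` via the composite-pseudofunctor
formulas). -/
def strT (T : GrayTensor C) :
    ∀ {X Y Z : C} {Ls Lm Lt : List C} (t : T.Tup X Ls Y Lm) (s : T.Tup Y Lm Z Lt),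
      (T.tM t ≫ T.tM s ⟶ T.tM (T.vcompT t s))
  | _, _, _, _, _, _, .base f, .base g => 𝟙 (f ≫ g)
  | _, _, _, _, _, _, .cons f t, .cons g s =>
      (T.str f (T.tM t) g (T.tM s)).hom ≫ T.map₂ (𝟙 (f ≫ g)) (strT T t s)

/-- The identity parallel tuple. -/
def idTup (T : GrayTensor C) : ∀ (X : C) (L : List C), T.Tup X L X L
  | X, [] => .base (𝟙 X)
  | X, Y :: L => .cons (𝟙 X) (idTup T Y L)

end GrayTensor
namespace GrayTensor

variable {C : Type u} [Bicategory.{w, v} C] [Bicategory.Strict C]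

/-- The left-nested iterated tensor product of a tuple of objects (`⁽ⁿ⁾⊗`-style). -/
def lObjA (T : GrayTensor C) : C → List C → C
  | X, [] => X
  | X, Y :: L => lObjA T (T.obj X Y) L

/-- Auxiliary left fold for the left-nested tensor product of a tuple of 1-morphisms. -/
def lMAux (T : GrayTensor C) :
    ∀ {Z W : C} {Ls Lt : List C}, T.Tup Z Ls W Lt → ∀ {X Y : C}, (X ⟶ Y) →
      (T.lObjA (T.obj X Z) Ls ⟶ T.lObjA (T.obj Y W) Lt)
  | _, _, _, _, .base g, _, _, f => T.map f g
  | _, _, _, _, .cons g t, _, _, f => lMAux T t (T.map f g)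

/-- The left-nested (`⁽ⁿ⁾⊗`-style) tensor product of a parallel tuple of 1-morphisms. -/
def lM (T : GrayTensor C) :
    ∀ {X Y : C} {Ls Lt : List C}, T.Tup X Ls Y Lt → (T.lObjA X Ls ⟶ T.lObjA Y Lt)
  | _, _, _, _, .base f => f
  | _, _, _, _, .cons f t => T.lMAux t f

/-- Whiskering a 2-cell into the accumulator slot of the left fold. -/
def lM₂Aux (T : GrayTensor C) :
    ∀ {Z W : C} {Ls Lt : List C} (t : T.Tup Z Ls W Lt) {X Y : C} {u u' : X ⟶ Y},
      (u ⟶ u') → (T.lMAux t u ⟶ T.lMAux t u')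
  | _, _, _, _, .base g, _, _, _, _, η => T.map₂ η (𝟙 g)
  | _, _, _, _, .cons g t, _, _, _, _, η => lM₂Aux T t (T.map₂ η (𝟙 g))

/-- Auxiliary left fold for the structural 2-cells of the left-nested iterate. -/
def lSAux (T : GrayTensor C) :
    ∀ {Z W V : C} {Ls Lm Lt : List C} (t : T.Tup Z Ls W Lm) (s : T.Tup W Lm V Lt)
      {X Y Y' : C} (f : X ⟶ Y) (g : Y ⟶ Y'),
      (T.lMAux t f ≫ T.lMAux s g ⟶ T.lMAux (T.vcompT t s) (f ≫ g))
  | _, _, _, _, _, _, .base u, .base v, _, _, _, f, g => (T.str f u g v).hom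
  | _, _, _, _, _, _, .cons u t, .cons v s, _, _, _, f, g =>
      lSAux T t s (T.map f u) (T.map g v) ≫
        T.lM₂Aux (T.vcompT t s) (T.str f u g v).hom

/-- The structural 2-cell of the left-nested iterated tensor product `⁽ⁿ⁾⊗` on a pair
of composable parallel tuples. -/
def lS (T : GrayTensor C) :
    ∀ {X Y Z : C} {Ls Lm Lt : List C} (t : T.Tup X Ls Y Lm) (s : T.Tup Y Lm Z Lt),
      (T.lM t ≫ T.lM s ⟶ T.lM (T.vcompT t s))
  | _, _, _, _, _, _, .base f, .base g => 𝟙 (f ≫ g)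
  | _, _, _, _, _, _, .cons f t, .cons g s => T.lSAux t s f g

end GrayTensor

open GrayTensor

section AuxLemmas

variable {C : Type u} [Bicategory.{w, v} C] [Bicategory.Strict C]

private lemma heq_comp₁ {X Y Z X' Y' Z' : C} (hX : X = X') (hY : Y = Y') (hZ : Z = Z')
    {f : X ⟶ Y} {g : Y ⟶ Z} {f' : X' ⟶ Y'} {g' : Y' ⟶ Z'}
    (hf : HEq f f') (hg : HEq g g') : HEq (f ≫ g) (f' ≫ g') := by
  subst hX; subst hY; subst hZ
  rw [eq_of_heq hf, eq_of_heq hg]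

private lemma heq_vcomp {X Y X' Y' : C} (hX : X = X') (hY : Y = Y')
    {a b c : X ⟶ Y} {a' b' c' : X' ⟶ Y'}
    (ha : HEq a a') (hb : HEq b b') (hc : HEq c c')
    {η : a ⟶ b} {θ : b ⟶ c} {η' : a' ⟶ b'} {θ' : b' ⟶ c'}
    (h1 : HEq η η') (h2 : HEq θ θ') : HEq (η ≫ θ) (η' ≫ θ') := by
  subst hX; subst hY
  cases eq_of_heq ha; cases eq_of_heq hb; cases eq_of_heq hc
  rw [eq_of_heq h1, eq_of_heq h2]

private lemma tObj_eq_lObjA (T : GrayTensor C) :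
    ∀ (L : List C) (X : C), T.tObj X L = T.lObjA X L
  | [], _ => rfl
  | Y :: L, X =>
      (T.tObj_assoc X Y L).symm.trans (tObj_eq_lObjA T L (T.obj X Y))

private lemma obj_tObj_eq (T : GrayTensor C) (X Z : C) (L : List C) :
    T.obj X (T.tObj Z L) = T.lObjA (T.obj X Z) L :=
  (T.tObj_assoc X Z L).symm.trans (tObj_eq_lObjA T L (T.obj X Z))

private lemma map_tM_heq (T : GrayTensor C) :
    ∀ {Z W : C} {Ls Lt : List C} (t : T.Tup Z Ls W Lt) {X Y : C} (u : X ⟶ Y),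
      HEq (T.map u (T.tM t)) (T.lMAux t u)
  | _, _, _, _, .base _, _, _, _ => HEq.rfl
  | _, _, _, _, .cons g t, _, _, u =>
      (T.mapAssoc u g (T.tM t)).trans (map_tM_heq T t (T.map u g))

private lemma map₂_tM_heq (T : GrayTensor C) :
    ∀ {Z W : C} {Ls Lt : List C} (r : T.Tup Z Ls W Lt)
      {X Y : C} {u u' : X ⟶ Y} (η : u ⟶ u'),
      HEq (T.map₂ η (𝟙 (T.tM r))) (T.lM₂Aux r η)
  | _, _, _, _, .base _, _, _, _, _, _ => HEq.rfl
  | _, _, _, _, .cons g r, _, _, _, _, η => by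
      show HEq (T.map₂ η (𝟙 (T.map g (T.tM r)))) (T.lM₂Aux r (T.map₂ η (𝟙 g)))
      rw [← T.map₂_id g (T.tM r)]
      exact (T.map₂Assoc η (𝟙 g) (𝟙 (T.tM r))).trans (map₂_tM_heq T r (T.map₂ η (𝟙 g)))

private lemma map₂_id_comp (T : GrayTensor C) {X X' Y Y' : C} (u : X ⟶ X')
    {g₁ g₂ g₃ : Y ⟶ Y'} (x : g₁ ⟶ g₂) (y : g₂ ⟶ g₃) :
    T.map₂ (𝟙 u) (x ≫ y) = T.map₂ (𝟙 u) x ≫ T.map₂ (𝟙 u) y := by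
  rw [← T.map₂_vcomp, Category.comp_id]

private lemma map₂_interchange (T : GrayTensor C) {X X' : C} {u u' : X ⟶ X'}
    {Y Y' : C} {h h' : Y ⟶ Y'} (α : u ⟶ u') (β : h ⟶ h') :
    T.map₂ α (𝟙 h) ≫ T.map₂ (𝟙 u') β = T.map₂ (𝟙 u) β ≫ T.map₂ α (𝟙 h') := by
  rw [← T.map₂_vcomp, ← T.map₂_vcomp, Category.comp_id, Category.id_comp,
    Category.comp_id, Category.id_comp]

private lemma strAux_heq (T : GrayTensor C) :
    ∀ {X Y Z : C} {Ls Lm Lt : List C} (t : T.Tup X Ls Y Lm) (s : T.Tup Y Lm Z Lt)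
      {P Q R : C} (f : P ⟶ Q) (g : Q ⟶ R),
      HEq ((T.str f (T.tM t) g (T.tM s)).hom ≫ T.map₂ (𝟙 (f ≫ g)) (T.strT t s))
        (T.lSAux t s f g)
  | _, _, _, _, _, _, .base u', .base v', _, _, _, f, g => by
      show HEq ((T.str f u' g v').hom ≫ T.map₂ (𝟙 (f ≫ g)) (𝟙 (u' ≫ v')))
        (T.str f u' g v').hom
      rw [T.map₂_id, Category.comp_id]
  | _, _, _, _, _, _, .cons u t, .cons v s, _, _, _, f, g => by
      have A := T.tM t
      have h2 : HEq (T.map₂ (𝟙 (f ≫ g)) (T.map₂ (𝟙 (u ≫ v)) (T.strT t s)))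
          (T.map₂ (𝟙 (T.map (f ≫ g) (u ≫ v))) (T.strT t s)) :=
        (T.map₂Assoc (𝟙 (f ≫ g)) (𝟙 (u ≫ v)) (T.strT t s)).trans
          (heq_of_eq (by rw [T.map₂_id]))
      show HEq ((T.str f (T.map u (T.tM t)) g (T.map v (T.tM s))).hom ≫
          T.map₂ (𝟙 (f ≫ g))
            ((T.str u (T.tM t) v (T.tM s)).hom ≫ T.map₂ (𝟙 (u ≫ v)) (T.strT t s)))
        (T.lSAux t s (T.map f u) (T.map g v) ≫
          T.lM₂Aux (T.vcompT t s) (T.str f u g v).hom)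
      rw [map₂_id_comp, ← Category.assoc]
      refine HEq.trans (heq_vcomp (T.objAssoc _ _ _) (T.objAssoc _ _ _)
        (heq_comp₁ (T.objAssoc _ _ _) (T.objAssoc _ _ _) (T.objAssoc _ _ _)
          (T.mapAssoc f u (T.tM t)) (T.mapAssoc g v (T.tM s)))
        (T.mapAssoc (f ≫ g) (u ≫ v) (T.tM t ≫ T.tM s))
        (T.mapAssoc (f ≫ g) (u ≫ v) (T.tM (T.vcompT t s)))
        (T.gray f g u v (T.tM t) (T.tM s)).symm h2) ?_
      rw [Category.assoc, map₂_interchange, ← Category.assoc]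
      exact heq_vcomp (obj_tObj_eq T _ _ _) (obj_tObj_eq T _ _ _)
        (heq_comp₁ (obj_tObj_eq T _ _ _) (obj_tObj_eq T _ _ _) (obj_tObj_eq T _ _ _)
          (map_tM_heq T t (T.map f u)) (map_tM_heq T s (T.map g v)))
        (map_tM_heq T (T.vcompT t s) (T.map f u ≫ T.map g v))
        (map_tM_heq T (T.vcompT t s) (T.map (f ≫ g) (u ≫ v)))
        (strAux_heq T t s (T.map f u) (T.map g v))
        (map₂_tM_heq T (T.vcompT t s) (T.str f u g v).hom)

end AuxLemmas

/-- In a Gray semigroup `(C, ⊗)`, the `n`-fold iterated tensor products agree as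
pseudofunctors for every `n ≥ 1`: the completely right-parenthesized iterate `⊗⁽ⁿ⁾`
and the completely left-parenthesized iterate `⁽ⁿ⁾⊗` agree on objects, on 1-morphisms
and on the structural 2-isomorphisms, and the resulting pseudofunctor `⊗(n)` is
unitary (it sends identity tuples to identities). -/
theorem gray_iterated_tensor_products_agree
    {C : Type u} [Bicategory.{w, v} C] [Bicategory.Strict C] (T : GrayTensor C) :
    (∀ (X : C) (L : List C), T.tObj X L = T.lObjA X L) ∧
    (∀ (X Y : C) (Ls Lt : List C) (t : T.Tup X Ls Y Lt), HEq (T.tM t) (T.lM t)) ∧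
    (∀ (X Y Z : C) (Ls Lm Lt : List C) (t : T.Tup X Ls Y Lm) (s : T.Tup Y Lm Z Lt),
      HEq (T.strT t s) (T.lS t s)) ∧
    (∀ (X : C) (L : List C), T.tM (T.idTup X L) = 𝟙 (T.tObj X L)) := by
  refine ⟨fun X L => tObj_eq_lObjA T L X, ?_, ?_, ?_⟩
  · intro X Y Ls Lt t
    cases t with
    | base f => exact HEq.rfl
    | cons f t => exact map_tM_heq T t f
  · intro X Y Z Ls Lm Lt t s
    cases t with
    | base f =>
      cases s with
      | base g => exact HEq.rfl
    | cons f t =>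
      cases s with
      | cons g s => exact strAux_heq T t s f g
  · intro X L
    induction L generalizing X with
    | nil => rfl
    | cons Y L ih =>
      show T.map (𝟙 X) (T.tM (T.idTup Y L)) = _
      rw [ih, T.map_id]
      rfl
end

section
/- The pentagonator-coboundary on general pseudomodifications squares to zero: for a K-linear semigroupal 2-category, the map δ_pent defined on families 𝔫 = (𝔫_{X_1,...,X_n}) by (δ_pent 𝔫)_{X_0,...,X_n} = ⌈⌈1_{id_{X_0}} ⊗ 𝔫_{X_1,...,X_n}⌉⌉ + Σ_{i=1}^n (−1)^i ⌈⌈𝔫_{X_0,...,X_{i-1}⊗X_i,...,X_n}⌉⌉ + (−1)^{n+1} ⌈⌈𝔫_{X_0,...,X_{n-1}} ⊗ 1_{id_{X_n}}⌉⌉ satisfies δ_pent ∘ δ_pent = 0. -/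
open CategoryTheory CategoryTheory.Bicategory

universe w v u

variable {C : Type u} [Bicategory.{w, v} C] [Bicategory.Strict C]

namespace GrayTensor

variable {C : Type u} [Bicategory.{w, v} C] [Bicategory.Strict C]

/-- Contraction of a tuple of objects (head plus list) at position `i`: the `i`-th and
`(i+1)`-st entries are replaced by their tensor product. -/
def ocP (T : GrayTensor C) : C → List C → ℕ → C × List C
  | X, [], _ => (X, [])
  | X, Y :: L, 0 => (T.obj X Y, L)
  | X, Y :: L, Nat.succ j => (X, (ocP T Y L j).1 :: (ocP T Y L j).2)

lemma tObj_ocP (T : GrayTensor C) :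
    ∀ (L : List C) (X : C) (j : ℕ),
      T.tObj (T.ocP X L j).1 (T.ocP X L j).2 = T.tObj X L
  | [], X, j => rfl
  | Y :: L, X, 0 => T.tObj_assoc X Y L
  | Y :: L, X, j + 1 => by
      show T.obj X (T.tObj (T.ocP Y L j).1 (T.ocP Y L j).2) = _
      rw [tObj_ocP T L Y j]
      rfl

/-- Split the last entry off a tuple of objects (head plus nonempty list). -/
def splitL : C → List C → C × List C × C
  | X, [] => (X, [], X)
  | X, [Y] => (X, [], Y)
  | X, Y :: Z :: L =>
      let s := splitL Y (Z :: L)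
      (X, s.1 :: s.2.1, s.2.2)

lemma splitL_obj (T : GrayTensor C) :
    ∀ (L : List C) (X : C), L ≠ [] →
      T.obj (T.tObj (splitL X L).1 (splitL X L).2.1) (splitL X L).2.2 = T.tObj X L
  | [], X, h => absurd rfl h
  | [Y], X, _ => rfl
  | Y :: Z :: L, X, _ => by
      show T.obj (T.obj X (T.tObj (splitL Y (Z :: L)).1 (splitL Y (Z :: L)).2.1))
          (splitL Y (Z :: L)).2.2 = _
      rw [← T.objAssoc, splitL_obj T (Z :: L) Y (by simp)]
      rfl

variable [∀ X Y : C, Preadditive (X ⟶ Y)]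

/-- A (pseudomodification-type) pentagonator cochain on a Gray semigroup: for each
tuple of objects, an endo-2-cell of the identity 1-morphism of their tensor product.
(For a Gray semigroup the reference `a`-paths `a⁽ⁿ⁾` and `⁽ⁿ⁾a` are identities.) -/
def PCochain (T : GrayTensor C) :=
  ∀ (X : C) (L : List C), 𝟙 (T.tObj X L) ⟶ 𝟙 (T.tObj X L)

/-- The pentagonator coboundary `δ_pent`, given by
`(δ𝔫)_{X₀,…,X_n} = 1_{id_{X₀}} ⊗ 𝔫_{X₁,…,X_n} + Σᵢ (−1)ⁱ 𝔫_{…,X_{i−1}⊗X_i,…}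
+ (−1)ⁿ⁺¹ 𝔫_{X₀,…,X_{n−1}} ⊗ 1_{id_{X_n}}` (the paddings `⌈⌈—⌉⌉` being trivial in a Gray
semigroup, up to the canonical reidentifications of the underlying objects). -/
def dpent (T : GrayTensor C) (m : PCochain T) : PCochain T
  | X, [] => 0
  | X, Y :: L =>
      (eqToHom (T.map_id X (T.tObj Y L)).symm ≫ T.map₂ (𝟙 (𝟙 X)) (m Y L) ≫
          eqToHom (T.map_id X (T.tObj Y L)))
      + (∑ i ∈ Finset.range (Y :: L).length, ((-1 : ℤ) ^ (i + 1)) •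
          ((cast (congrArg (fun A : C => (𝟙 A ⟶ 𝟙 A)) (T.tObj_ocP (Y :: L) X i))
            (m (T.ocP X (Y :: L) i).1 (T.ocP X (Y :: L) i).2) :
              𝟙 (T.obj X (T.tObj Y L)) ⟶ 𝟙 (T.obj X (T.tObj Y L)))))
      + ((-1 : ℤ) ^ ((Y :: L).length + 1) •
          ((cast (congrArg (fun A : C => (𝟙 A ⟶ 𝟙 A)) (T.splitL_obj (Y :: L) X (by simp)))
            (eqToHom (T.map_id _ _).symm ≫
              T.map₂ (m (splitL X (Y :: L)).1 (splitL X (Y :: L)).2.1)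
                (𝟙 (𝟙 (splitL X (Y :: L)).2.2)) ≫
              eqToHom (T.map_id _ _)) :
              𝟙 (T.obj X (T.tObj Y L)) ⟶ 𝟙 (T.obj X (T.tObj Y L)))))

end GrayTensor

/-!
Write `δ_pent` as the alternating sum `Σₖ (-1)ᵏ dₖ` of face operators: `d₀` tensors with
`1_{id_{X₀}}` on the left, `dᵢ` (`0 < i ≤ n`) contracts `Xᵢ₋₁, Xᵢ` to `Xᵢ₋₁ ⊗ Xᵢ`, and `dₙ₊₁`
tensors with `1_{id_{Xₙ}}` on the right. Since `⊗` is strictly associative on objects,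
1-morphisms and 2-morphisms, and biadditive, the faces satisfy the semi-simplicial identities
`dₖ₊₁ dₗ = dₗ dₖ` for `l ≤ k`, so the terms of `δ_pent ∘ δ_pent` cancel in pairs.
-/

open Finset in
lemma Finset.sum_range_sum_range_neg_one_pow_smul_eq_zero {G : Type*} [AddCommGroup G] (n : ℕ)
    (f : ℕ → ℕ → G) (hf : ∀ l k, l ≤ k → k ≤ n → f (k + 1) l = f l k) :
    ∑ k ∈ range (n + 2), ∑ l ∈ range (n + 1), (-1 : ℤ) ^ (k + l) • f k l = 0 := by
  have hsign : ∀ a b : ℕ, a = b + 1 ∨ b = a + 1 → (-1 : ℤ) ^ a + (-1) ^ b = 0 := by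
    rintro a b (rfl | rfl) <;> rw [pow_succ] <;> ring
  rw [← sum_product']
  refine sum_involution (fun p _ => if p.2 < p.1 then (p.2, p.1 - 1) else (p.2 + 1, p.1))
    ?_ ?_ ?_ ?_
  · rintro ⟨k, l⟩ hp
    simp only [mem_product, mem_range] at hp
    split_ifs with hlk
    · obtain ⟨k, rfl⟩ : ∃ k', k = k' + 1 := ⟨k - 1, by omega⟩
      rw [Nat.add_sub_cancel, hf l k (by omega) (by omega), ← add_smul, hsign _ _ (by omega),
        zero_smul]
    · rw [← hf k l (by omega) (by omega), ← add_smul, hsign _ _ (by omega), zero_smul]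
  · rintro ⟨k, l⟩ - - h
    split_ifs at h <;> simp only [Prod.mk.injEq] at h <;> omega
  · rintro ⟨k, l⟩ hp
    simp only [mem_product, mem_range] at hp
    split_ifs <;> simp only [mem_product, mem_range] <;> omega
  · rintro ⟨k, l⟩ -
    by_cases h : l < k
    · simp only [h, if_true, show ¬k - 1 < l by omega, if_false, Prod.mk.injEq, and_true]
      omega
    · simp [h, show k < l + 1 by omega]

section EndCast

variable {𝒞 : Type*} [Bicategory 𝒞]

/-- The reidentification `⌈⌈—⌉⌉` occurring in `dpent`. -/
def endCast {A B : 𝒞} (h : A = B) (f : 𝟙 A ⟶ 𝟙 A) : 𝟙 B ⟶ 𝟙 B :=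
  cast (congrArg (fun A : 𝒞 => (𝟙 A ⟶ 𝟙 A)) h) f

lemma endCast_heq {A B : 𝒞} (h : A = B) (f : 𝟙 A ⟶ 𝟙 A) : HEq (endCast h f) f := by
  subst h; rfl

lemma endCast_add [∀ X Y : 𝒞, Preadditive (X ⟶ Y)] {A B : 𝒞} (h : A = B) (f g : 𝟙 A ⟶ 𝟙 A) :
    endCast h (f + g) = endCast h f + endCast h g := by
  subst h; rfl

lemma eqToHom_comp_comp_eqToHom_heq {A A' : 𝒞} (hA : A = A') {p q : A ⟶ A} {p' q' : A' ⟶ A'}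
    (hp : HEq p p') (hq : HEq q q') {φ : p ⟶ q} {φ' : p' ⟶ q'} (hφ : HEq φ φ')
    (e₁ : 𝟙 A = p) (e₂ : q = 𝟙 A) (e₁' : 𝟙 A' = p') (e₂' : q' = 𝟙 A') :
    HEq (eqToHom e₁ ≫ φ ≫ eqToHom e₂) (eqToHom e₁' ≫ φ' ≫ eqToHom e₂') := by
  subst hA
  obtain rfl := eq_of_heq hp
  obtain rfl := eq_of_heq hq
  rw [eq_of_heq hφ]

end EndCast

namespace GrayTensor

lemma splitL_length {α : Type*} :
    ∀ (L : List α) (X : α), L ≠ [] → (splitL X L).2.1.length + 1 = L.length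
  | [], _, h => absurd rfl h
  | [_], _, _ => rfl
  | Y :: Z :: M, _, _ => by
    simp only [splitL, List.length_cons, splitL_length (Z :: M) Y (List.cons_ne_nil _ _)]

lemma splitL_cons {α : Type*} (X Y : α) {L : List α} (hL : L ≠ []) :
    splitL X (Y :: L) = (X, (splitL Y L).1 :: (splitL Y L).2.1, (splitL Y L).2.2) := by
  cases L with
  | nil => exact absurd rfl hL
  | cons Z M => rfl

section

variable (T : GrayTensor C)

def tensorEnd {A B : C} (f : 𝟙 A ⟶ 𝟙 A) (g : 𝟙 B ⟶ 𝟙 B) : 𝟙 (T.obj A B) ⟶ 𝟙 (T.obj A B) :=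
  eqToHom (T.map_id A B).symm ≫ T.map₂ f g ≫ eqToHom (T.map_id A B)

lemma tensorEnd_id_id (A B : C) : T.tensorEnd (𝟙 (𝟙 A)) (𝟙 (𝟙 B)) = 𝟙 (𝟙 (T.obj A B)) := by
  simp [tensorEnd, map₂_id]

lemma tensorEnd_congr_heq {A A' B B' : C} (hA : A = A') (hB : B = B') {f : 𝟙 A ⟶ 𝟙 A}
    {f' : 𝟙 A' ⟶ 𝟙 A'} {g : 𝟙 B ⟶ 𝟙 B} {g' : 𝟙 B' ⟶ 𝟙 B'} (hf : HEq f f') (hg : HEq g g') :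
    HEq (T.tensorEnd f g) (T.tensorEnd f' g') := by
  subst hA hB
  rw [eq_of_heq hf, eq_of_heq hg]

lemma map₂_conj_eqToHom_right {X X' Y Y' : C} {f f' : X ⟶ X'} (τ : f ⟶ f')
    {g₁ g₂ g₃ g₄ : Y ⟶ Y'} (e₁ : g₁ = g₂) (σ : g₂ ⟶ g₃) (e₂ : g₃ = g₄) :
    T.map₂ τ (eqToHom e₁ ≫ σ ≫ eqToHom e₂) =
      eqToHom (by rw [e₁]) ≫ T.map₂ τ σ ≫ eqToHom (by rw [e₂]) := by
  subst e₁ e₂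
  simp

lemma map₂_conj_eqToHom_left {X X' Y Y' : C} {f₁ f₂ f₃ f₄ : X ⟶ X'} (e₁ : f₁ = f₂)
    (τ : f₂ ⟶ f₃) (e₂ : f₃ = f₄) {g g' : Y ⟶ Y'} (σ : g ⟶ g') :
    T.map₂ (eqToHom e₁ ≫ τ ≫ eqToHom e₂) σ =
      eqToHom (by rw [e₁]) ≫ T.map₂ τ σ ≫ eqToHom (by rw [e₂]) := by
  subst e₁ e₂
  simp

lemma tensorEnd_assoc_heq {A B D : C} (f : 𝟙 A ⟶ 𝟙 A) (g : 𝟙 B ⟶ 𝟙 B) (h : 𝟙 D ⟶ 𝟙 D) :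
    HEq (T.tensorEnd f (T.tensorEnd g h)) (T.tensorEnd (T.tensorEnd f g) h) := by
  simp only [tensorEnd, map₂_conj_eqToHom_right, map₂_conj_eqToHom_left, Category.assoc,
    eqToHom_trans, eqToHom_trans_assoc]
  exact eqToHom_comp_comp_eqToHom_heq (T.objAssoc A B D) (T.mapAssoc _ _ _) (T.mapAssoc _ _ _)
    (T.map₂Assoc f g h) _ _ _ _

lemma ocP_length : ∀ (L : List C) (X : C) (i : ℕ), i < L.length →
    (T.ocP X L i).2.length + 1 = L.length
  | [], _, _, h => absurd h (Nat.not_lt_zero _)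
  | _ :: _, _, 0, _ => rfl
  | _ :: L, _, i + 1, h => by
    simp only [ocP, List.length_cons, ocP_length L _ i (Nat.lt_of_succ_lt_succ h)]

lemma ocP_ocP : ∀ (L : List C) (X : C) {a b : ℕ}, b ≤ a →
    T.ocP (T.ocP X L (a + 1)).1 (T.ocP X L (a + 1)).2 b =
      T.ocP (T.ocP X L b).1 (T.ocP X L b).2 a
  | [], _, _, _, _ => rfl
  | [_], _, _, 0, _ => rfl
  | _ :: _ :: _, _, 0, 0, _ => by simp [ocP, T.objAssoc]
  | _ :: _ :: _, _, _ + 1, 0, _ => rfl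
  | _ :: L, _, a + 1, b + 1, h => by
    simp only [ocP, ocP_ocP L _ (Nat.le_of_succ_le_succ h)]

lemma ocP_snd_ne_nil {L : List C} (X : C) {i : ℕ} (hi : i < L.length) (hL : 2 ≤ L.length) :
    (T.ocP X L i).2 ≠ [] := by
  have hlen := T.ocP_length L X i hi
  rintro hnil
  simp only [hnil, List.length_nil] at hlen
  omega

lemma splitL_ocP : ∀ (L : List C) (X : C) (i : ℕ), i + 1 < L.length →
    splitL (T.ocP X L i).1 (T.ocP X L i).2 =
      ((T.ocP (splitL X L).1 (splitL X L).2.1 i).1,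
       (T.ocP (splitL X L).1 (splitL X L).2.1 i).2, (splitL X L).2.2)
  | [], _, _, h => by simp at h
  | [_], _, _, h => by simp at h
  | [_, _], _, 0, _ => rfl
  | _ :: _ :: _ :: _, _, 0, _ => rfl
  | Y :: Z :: M, X, i + 1, h => by
    have h' : i + 1 < (Z :: M).length := by simpa using h
    change splitL X ((T.ocP Y (Z :: M) i).1 :: (T.ocP Y (Z :: M) i).2) = _
    rw [splitL_cons X _ (T.ocP_snd_ne_nil Y (by omega) (by omega)), splitL_ocP (Z :: M) Y i h',
      splitL_cons X Y (List.cons_ne_nil Z M)]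
    rfl

lemma splitL_ocP_last : ∀ (L : List C) (X : C) (i : ℕ), L.length = i + 2 →
    splitL (T.ocP X L (i + 1)).1 (T.ocP X L (i + 1)).2 =
      ((splitL (splitL X L).1 (splitL X L).2.1).1,
       (splitL (splitL X L).1 (splitL X L).2.1).2.1,
       T.obj (splitL (splitL X L).1 (splitL X L).2.1).2.2 (splitL X L).2.2)
  | [_, _], _, 0, _ => rfl
  | Y :: Z :: W :: M, X, i + 1, h => by
    have h' : (Z :: W :: M).length = i + 2 := by simpa using h
    change splitL X ((T.ocP Y (Z :: W :: M) (i + 1)).1 :: (T.ocP Y (Z :: W :: M) (i + 1)).2) = _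
    rw [splitL_cons X _ (T.ocP_snd_ne_nil Y (by omega) (by simp)),
      splitL_ocP_last (Z :: W :: M) Y i h', splitL_cons X Y (List.cons_ne_nil Z _),
      splitL_cons X _ (by simp [splitL])]
  | [], _, _, h | [_], _, _, h | [_, _], _, _ + 1, h | _ :: _ :: _ :: _, _, 0, h => by
    simp at h

end

section Additive

variable (T : GrayTensor C) [∀ X Y : C, Preadditive (X ⟶ Y)]

instance : AddCommGroup (PCochain T) :=
  inferInstanceAs (AddCommGroup (∀ (X : C) (L : List C), 𝟙 (T.tObj X L) ⟶ 𝟙 (T.tObj X L)))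

/-- `face m k` is the summand `dₖ m` of `dpent m`; it vanishes on one-object tuples and for
`k` out of range. -/
def face (m : PCochain T) : ℕ → PCochain T
  | _, _, [] => 0
  | 0, X, Y :: L => T.tensorEnd (𝟙 (𝟙 X)) (m Y L)
  | i + 1, X, Y :: L =>
    if i < L.length + 1 then
      endCast (T.tObj_ocP (Y :: L) X i) (m (T.ocP X (Y :: L) i).1 (T.ocP X (Y :: L) i).2)
    else if i = L.length + 1 then
      endCast (T.splitL_obj (Y :: L) X (List.cons_ne_nil Y L))
        (T.tensorEnd (m (splitL X (Y :: L)).1 (splitL X (Y :: L)).2.1)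
          (𝟙 (𝟙 (splitL X (Y :: L)).2.2)))
    else 0

abbrev Map₂AdditiveLeft : Prop :=
  ∀ {X X' Y Y' : C} {f f' : X ⟶ X'} {g g' : Y ⟶ Y'} (τ τ' : f ⟶ f') (σ : g ⟶ g'),
    T.map₂ (τ + τ') σ = T.map₂ τ σ + T.map₂ τ' σ

abbrev Map₂AdditiveRight : Prop :=
  ∀ {X X' Y Y' : C} {f f' : X ⟶ X'} {g g' : Y ⟶ Y'} (τ : f ⟶ f') (σ σ' : g ⟶ g'),
    T.map₂ τ (σ + σ') = T.map₂ τ σ + T.map₂ τ σ'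

variable {T}

lemma face_zero_cons (m : PCochain T) (X Y : C) (L : List C) :
    T.face m 0 X (Y :: L) = T.tensorEnd (𝟙 (𝟙 X)) (m Y L) := rfl

lemma face_succ_of_lt (m : PCochain T) {L : List C} (X : C) {i : ℕ} (hi : i < L.length) :
    T.face m (i + 1) X L =
      endCast (T.tObj_ocP L X i) (m (T.ocP X L i).1 (T.ocP X L i).2) := by
  cases L with
  | nil => exact absurd hi (Nat.not_lt_zero _)
  | cons Y L => exact if_pos hi

lemma face_length_succ (m : PCochain T) {L : List C} (X : C) (hL : L ≠ []) :
    T.face m (L.length + 1) X L =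
      endCast (T.splitL_obj L X hL)
        (T.tensorEnd (m (splitL X L).1 (splitL X L).2.1) (𝟙 (𝟙 (splitL X L).2.2))) := by
  cases L with
  | nil => exact absurd rfl hL
  | cons Y L => exact (if_neg (by simp)).trans (if_pos rfl)

lemma face_succ_heq (m : PCochain T) {L : List C} (X : C) {i : ℕ} (hi : i < L.length) :
    HEq (T.face m (i + 1) X L) (m (T.ocP X L i).1 (T.ocP X L i).2) := by
  rw [face_succ_of_lt m X hi]
  exact endCast_heq _ _

lemma face_last_heq (m : PCochain T) {L : List C} (X : C) (hL : L ≠ []) {k : ℕ}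
    (hk : k = L.length + 1) :
    HEq (T.face m k X L)
      (T.tensorEnd (m (splitL X L).1 (splitL X L).2.1) (𝟙 (𝟙 (splitL X L).2.2))) := by
  subst hk
  rw [face_length_succ m X hL]
  exact endCast_heq _ _

lemma face_congr {m₁ m₂ : PCochain T} (k : ℕ) (X : C) (L : List C)
    (h : ∀ X' L', L'.length + 1 = L.length → m₁ X' L' = m₂ X' L') :
    T.face m₁ k X L = T.face m₂ k X L := by
  match k, L with
  | _, [] => rfl
  | 0, Y :: L => rw [face_zero_cons, face_zero_cons, h Y L rfl]
  | i + 1, Y :: L =>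
    simp only [face]
    split_ifs with hi
    · rw [h _ _ (T.ocP_length (Y :: L) X i hi)]
    · rw [h _ _ (splitL_length (Y :: L) X (List.cons_ne_nil Y L))]
    · rfl

lemma tensorEnd_add_left (hl : T.Map₂AdditiveLeft) {A B : C} (f f' : 𝟙 A ⟶ 𝟙 A)
    (g : 𝟙 B ⟶ 𝟙 B) : T.tensorEnd (f + f') g = T.tensorEnd f g + T.tensorEnd f' g := by
  simp only [tensorEnd, hl, Preadditive.add_comp, Preadditive.comp_add]

lemma tensorEnd_add_right (hr : T.Map₂AdditiveRight) {A B : C} (f : 𝟙 A ⟶ 𝟙 A)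
    (g g' : 𝟙 B ⟶ 𝟙 B) : T.tensorEnd f (g + g') = T.tensorEnd f g + T.tensorEnd f g' := by
  simp only [tensorEnd, hr, Preadditive.add_comp, Preadditive.comp_add]

lemma face_add (hl : T.Map₂AdditiveLeft) (hr : T.Map₂AdditiveRight) (m₁ m₂ : PCochain T)
    (k : ℕ) (X : C) (L : List C) :
    T.face (m₁ + m₂) k X L = T.face m₁ k X L + T.face m₂ k X L := by
  match k, L with
  | _, [] => exact (add_zero 0).symm
  | 0, Y :: L => exact tensorEnd_add_right hr _ _ _
  | i + 1, Y :: L =>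
    simp only [face]
    split_ifs
    · exact endCast_add _ _ _
    · exact (congrArg _ (tensorEnd_add_left hl _ _ _)).trans (endCast_add _ _ _)
    · exact (add_zero 0).symm

variable (T) in
def faceHom (hl : T.Map₂AdditiveLeft) (hr : T.Map₂AdditiveRight) (k : ℕ) :
    PCochain T →+ PCochain T :=
  AddMonoidHom.mk' (fun m => T.face m k) fun m₁ m₂ => funext₂ (face_add hl hr m₁ m₂ k)

lemma dpent_eq_sum_face (m : PCochain T) (X : C) (L : List C) :
    T.dpent m X L = ∑ k ∈ Finset.range (L.length + 2), (-1 : ℤ) ^ k • T.face m k X L := by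
  cases L with
  | nil => simp [dpent, face]
  | cons Y L =>
    rw [Finset.sum_range_succ, Finset.sum_range_succ',
      Finset.sum_congr rfl fun i hi => by rw [face_succ_of_lt m X (Finset.mem_range.mp hi)],
      face_length_succ m X (List.cons_ne_nil Y L)]
    simp only [dpent, endCast, face_zero_cons, tensorEnd, pow_zero]
    abel

lemma PCochain.sum_apply {ι : Type*} (s : Finset ι) (m : ι → PCochain T) (X : C)
    (L : List C) : (∑ i ∈ s, m i) X L = ∑ i ∈ s, m i X L := by
  induction s using Finset.cons_induction with
  | empty => rfl
  | cons i s hi ih => rw [Finset.sum_cons, Finset.sum_cons, ← ih]; rfl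

lemma face_dpent (hl : T.Map₂AdditiveLeft) (hr : T.Map₂AdditiveRight) (m : PCochain T) (k : ℕ)
    (X : C) (L : List C) :
    T.face (T.dpent m) k X L =
      ∑ l ∈ Finset.range (L.length + 1), (-1 : ℤ) ^ l • T.face (T.face m l) k X L := by
  rw [face_congr (m₂ := ∑ l ∈ Finset.range (L.length + 1), (-1 : ℤ) ^ l • T.face m l) k X L
    fun X' L' hL' => by rw [dpent_eq_sum_face, PCochain.sum_apply, ← hL']; rfl]
  change T.faceHom hl hr k _ X L = _
  rw [map_sum, PCochain.sum_apply]
  simp only [map_zsmul]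
  rfl

section FaceFace

variable (m : PCochain T)

lemma face_face_singleton (hl : T.Map₂AdditiveLeft) (hr : T.Map₂AdditiveRight) (l k : ℕ)
    (X Y : C) : T.face (T.face m l) k X [Y] = 0 := by
  rw [face_congr (m₂ := 0) k X [Y] fun X' L' hL' => by
    rw [List.length_eq_zero_iff.mp (Nat.succ_injective hL')]; rfl]
  exact congrFun (congrFun (map_zero (T.faceHom hl hr k)) X) [Y]

lemma face_face_zero_zero (X Y Z : C) (M : List C) :
    T.face (T.face m 0) 1 X (Y :: Z :: M) = T.face (T.face m 0) 0 X (Y :: Z :: M) := by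
  refine eq_of_heq ((face_succ_heq _ X (by simp)).trans ?_)
  change HEq (T.tensorEnd (𝟙 (𝟙 (T.obj X Y))) (m Z M))
    (T.tensorEnd (𝟙 (𝟙 X)) (T.tensorEnd (𝟙 (𝟙 Y)) (m Z M)))
  rw [← T.tensorEnd_id_id X Y]
  exact (T.tensorEnd_assoc_heq _ _ _).symm

lemma face_face_zero_succ (X Y : C) {M : List C} {j : ℕ} (hj : j < M.length) :
    T.face (T.face m 0) (j + 2) X (Y :: M) = T.face (T.face m (j + 1)) 0 X (Y :: M) := by
  refine eq_of_heq ((face_succ_heq _ X (by simpa using hj)).trans ?_)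
  change HEq (T.tensorEnd (𝟙 (𝟙 X)) (m (T.ocP Y M j).1 (T.ocP Y M j).2))
    (T.tensorEnd (𝟙 (𝟙 X)) (T.face m (j + 1) Y M))
  exact T.tensorEnd_congr_heq rfl (T.tObj_ocP M Y j) HEq.rfl (face_succ_heq m Y hj).symm

lemma face_face_zero_last (X Y : C) {M : List C} (hM : M ≠ []) :
    T.face (T.face m 0) (M.length + 2) X (Y :: M) =
      T.face (T.face m (M.length + 1)) 0 X (Y :: M) := by
  refine eq_of_heq ((face_last_heq _ X (List.cons_ne_nil Y M) rfl).trans ?_)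
  rw [splitL_cons X Y hM]
  change HEq (T.tensorEnd (T.tensorEnd (𝟙 (𝟙 X)) (m (splitL Y M).1 (splitL Y M).2.1))
      (𝟙 (𝟙 (splitL Y M).2.2)))
    (T.tensorEnd (𝟙 (𝟙 X)) (T.face m (M.length + 1) Y M))
  exact (T.tensorEnd_assoc_heq _ _ _).symm.trans <| T.tensorEnd_congr_heq rfl
    (splitL_obj T M Y hM) HEq.rfl (face_last_heq m Y hM rfl).symm

lemma face_face_succ_last (X : C) {L : List C} {i : ℕ} (hi : i + 1 < L.length) :
    T.face (T.face m (i + 1)) (L.length + 1) X L = T.face (T.face m L.length) (i + 1) X L := by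
  have hL : L ≠ [] := List.ne_nil_of_length_pos (by omega)
  have hS := splitL_length L X hL
  refine eq_of_heq ((face_last_heq _ X hL rfl).trans ?_)
  refine (T.tensorEnd_congr_heq (T.tObj_ocP _ _ i).symm rfl (face_succ_heq m _ (by omega))
    HEq.rfl).trans ?_
  refine (congr_arg_heq (fun t : C × List C × C => T.tensorEnd (m t.1 t.2.1) (𝟙 (𝟙 t.2.2)))
    (splitL_ocP T L X i hi).symm).trans ?_
  refine HEq.trans ?_ (face_succ_heq _ X (by omega)).symm
  exact (face_last_heq m _ (T.ocP_snd_ne_nil X (by omega) (by omega))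
    (T.ocP_length L X i (by omega)).symm).symm

lemma face_face_last_last (X : C) {L : List C} {i : ℕ} (h : L.length = i + 2) :
    T.face (T.face m (i + 2)) (i + 3) X L = T.face (T.face m (i + 2)) (i + 2) X L := by
  have hL : L ≠ [] := List.ne_nil_of_length_pos (by omega)
  have hS := splitL_length L X hL
  have hS' : (splitL X L).2.1 ≠ [] := List.ne_nil_of_length_pos (by omega)
  refine eq_of_heq ((face_last_heq _ X hL (by omega)).trans ?_)
  refine (T.tensorEnd_congr_heq (splitL_obj T _ _ hS').symm rfl
    (face_last_heq m _ hS' (by omega)) HEq.rfl).trans ?_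
  refine (T.tensorEnd_assoc_heq _ _ _).symm.trans ?_
  rw [tensorEnd_id_id]
  refine (congr_arg_heq (fun t : C × List C × C => T.tensorEnd (m t.1 t.2.1) (𝟙 (𝟙 t.2.2)))
    (splitL_ocP_last T L X i h).symm).trans ?_
  refine HEq.trans ?_ (face_succ_heq _ X (by omega)).symm
  exact (face_last_heq m _ (T.ocP_snd_ne_nil X (by omega) (by omega))
    (by rw [T.ocP_length L X (i + 1) (by omega), h])).symm

lemma face_face_succ_succ (X : C) {L : List C} {i j : ℕ} (hij : i ≤ j) (hj : j + 1 < L.length) :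
    T.face (T.face m (i + 1)) (j + 2) X L = T.face (T.face m (j + 1)) (i + 1) X L := by
  have hP := T.ocP_length L X (j + 1) hj
  have hQ := T.ocP_length L X i (by omega)
  refine eq_of_heq ((face_succ_heq _ X hj).trans ?_)
  refine (face_succ_heq m _ (by omega)).trans ?_
  refine (congr_arg_heq (fun p : C × List C => m p.1 p.2) (T.ocP_ocP L X hij)).trans ?_
  exact (face_succ_heq m _ (by omega)).symm.trans (face_succ_heq _ X (by omega)).symm

end FaceFace

lemma face_face (hl : T.Map₂AdditiveLeft) (hr : T.Map₂AdditiveRight) (m : PCochain T) (X : C)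
    (L : List C) {l k : ℕ} (hlk : l ≤ k) (hk : k ≤ L.length) :
    T.face (T.face m l) (k + 1) X L = T.face (T.face m k) l X L := by
  rcases L with _ | ⟨Y, _ | ⟨Z, M⟩⟩
  · obtain rfl : k = 0 := Nat.le_zero.mp hk
    obtain rfl : l = 0 := Nat.le_zero.mp hlk
    rfl
  · rw [face_face_singleton m hl hr, face_face_singleton m hl hr]
  · simp only [List.length_cons] at hk
    rcases l with _ | i
    · rcases k with _ | k
      · exact face_face_zero_zero m X Y Z M
      · rcases Nat.lt_or_ge k (M.length + 1) with hk' | hk'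
        · exact face_face_zero_succ m X Y hk'
        · obtain rfl : k = M.length + 1 := by omega
          exact face_face_zero_last m X Y (List.cons_ne_nil Z M)
    · rcases Nat.lt_or_ge k (M.length + 2) with hk' | hk'
      · obtain ⟨j, rfl⟩ : ∃ j, k = j + 1 := ⟨k - 1, by omega⟩
        exact face_face_succ_succ m X (Nat.le_of_succ_le_succ hlk) hk'
      · obtain rfl : k = M.length + 2 := by omega
        rcases Nat.lt_or_ge (i + 1) (M.length + 2) with hi | hi
        · exact face_face_succ_last m X (L := Y :: Z :: M) hi
        · obtain rfl : i = M.length + 1 := by omega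
          exact face_face_last_last m X rfl

end Additive

end GrayTensor

open GrayTensor

/-- The pentagonator coboundary on general (pseudomodification) cochains squares to
zero: for a `K`-linear Gray semigroup `(C, ⊗)` (2-morphism spaces additive, tensor
product of 2-morphisms biadditive), `δ_pent ∘ δ_pent = 0`. -/
theorem dpent_dpent {C : Type u} [Bicategory.{w, v} C] [Bicategory.Strict C]
    [∀ X Y : C, Preadditive (X ⟶ Y)] (T : GrayTensor C)
    (haddl : ∀ {X X' Y Y' : C} {f f' : X ⟶ X'} {g g' : Y ⟶ Y'}
      (τ τ' : f ⟶ f') (σ : g ⟶ g'), T.map₂ (τ + τ') σ = T.map₂ τ σ + T.map₂ τ' σ)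
    (haddr : ∀ {X X' Y Y' : C} {f f' : X ⟶ X'} {g g' : Y ⟶ Y'}
      (τ : f ⟶ f') (σ σ' : g ⟶ g'), T.map₂ τ (σ + σ') = T.map₂ τ σ + T.map₂ τ σ')
    (m : PCochain T) (X : C) (L : List C) :
    T.dpent (T.dpent m) X L = 0 := by
  rw [dpent_eq_sum_face]
  simp_rw [face_dpent haddl haddr, Finset.smul_sum, smul_smul, ← pow_add]
  exact Finset.sum_range_sum_range_neg_one_pow_smul_eq_zero _ _
    fun l k hlk hk => face_face haddl haddr m X L hlk hk
end
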